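/- arXiv:2408.03843 — 3 statements merged into one kernel-verified Lean document; each statement's English description precedes it below -/
import Mathlib

section
/- Let $G$ be a topological group with closed subgroups $K \subseteq L \subseteq G$. Suppose that the canonical map $G \to G/L$ admits a local section, i.e. there is a nonempty open subset $U \subseteq G/L$ and a continuous map $s : U \to G$ such that $s(u)L = u$ for all $u \in U$. Then the natural map $q : G/K \to G/L$ is a locally trivial bundle: every point of $G/L$ has an open neighborhood $V$ such that $q^{-1}(V)$ is homeomorphic to $V \times L/K$ via a homeomorphism commuting with the projections to $V$. -/
open scoped Manifold unitInterval Pointwise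
open Topology

/-- `p : E → B` has the homotopy lifting property with respect to `Z`:
any homotopy `f : Z × [0,1] → B` with a lift `f₀` of its time-`0` slice
extends to a lift `F : Z × [0,1] → E`. -/
def HasHLP {E B : Type*} [TopologicalSpace E] [TopologicalSpace B]
    (Z : Type*) [TopologicalSpace Z] (p : E → B) : Prop :=
  ∀ (f : Z × I → B) (f₀ : Z → E), Continuous f → Continuous f₀ →
    (∀ z, p (f₀ z) = f (z, 0)) →
    ∃ F : Z × I → E, Continuous F ∧ (∀ z, F (z, 0) = f₀ z) ∧ ∀ x, p (F x) = f x

/-- A topological group is a Lie group if it carries a smooth manifold structure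
(modelled on some `ℝⁿ`) making multiplication and inversion smooth. -/
def IsLieGroup (G : Type*) [Group G] [TopologicalSpace G] : Prop :=
  ∃ n : ℕ, ∃ cs : ChartedSpace (EuclideanSpace ℝ (Fin n)) G,
    letI := cs
    LieGroup (𝓡 n) (⊤ : ℕ∞) G

/-- A topological group is a locally compact pro-Lie group if it is locally compact and
every identity neighborhood contains a compact normal subgroup `N` such that `L/N`
is a Lie group. -/
def IsLocallyCompactProLieGroup (L : Type*) [Group L] [TopologicalSpace L] : Prop :=
  LocallyCompactSpace L ∧
    ∀ U ∈ nhds (1 : L), ∃ N : Subgroup L, (N : Set L) ⊆ U ∧ IsCompact (N : Set L) ∧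
      ∃ hN : N.Normal, letI := hN; IsLieGroup (L ⧸ N)

/-- The natural map `G/A → G/B`, `gA ↦ gB`, for subgroups `A ≤ B`. -/
def cosetMap {G : Type*} [Group G] {A B : Subgroup G} (h : A ≤ B) :
    G ⧸ A → G ⧸ B :=
  Quotient.map' id fun a b hab => by
    rw [QuotientGroup.leftRel_apply] at hab ⊢
    exact h hab

/-- `p` is a locally trivial bundle: every point `b` of the base has an open
neighborhood `V` over which `p` is trivial, with fiber the fiber over `b`. -/
def IsLocallyTrivial {E B : Type*} [TopologicalSpace E] [TopologicalSpace B]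
    (p : E → B) : Prop :=
  ∀ b : B, ∃ V : Set B, IsOpen V ∧ b ∈ V ∧
    ∃ h : ↥V × ↥(p ⁻¹' {b}) ≃ₜ ↥(p ⁻¹' V), ∀ x, p (h x : E) = (x.1 : B)

/-- `p` is a locally trivial bundle with fiber `F`. -/
def IsLocallyTrivialWithFiber {E B : Type*} [TopologicalSpace E] [TopologicalSpace B]
    (F : Type*) [TopologicalSpace F] (p : E → B) : Prop :=
  ∀ b : B, ∃ V : Set B, IsOpen V ∧ b ∈ V ∧
    ∃ h : ↥V × F ≃ₜ ↥(p ⁻¹' V), ∀ x, p (h x : E) = (x.1 : B)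

lemma cosetMap_mk' {G : Type*} [Group G] {A B : Subgroup G} (h : A ≤ B) (g : G) :
    cosetMap h (QuotientGroup.mk g) = QuotientGroup.mk g := rfl

lemma continuous_cosetMap' {G : Type*} [Group G] [TopologicalSpace G] [IsTopologicalGroup G]
    {A B : Subgroup G} (h : A ≤ B) : Continuous (cosetMap h) := by
  rw [(QuotientGroup.isQuotientMap_mk A).continuous_iff]
  exact QuotientGroup.continuous_mk

lemma triv_of_section {G : Type*} [Group G] [TopologicalSpace G] [IsTopologicalGroup G]
    (K L : Subgroup G) (hKL : K ≤ L)
    (V : Set (G ⧸ L)) (hV : IsOpen V) (s : ↥V → G) (hs : Continuous s)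
    (hsec : ∀ v : ↥V, (QuotientGroup.mk (s v) : G ⧸ L) = (v : G ⧸ L)) :
    ∃ h : ↥V × (↥L ⧸ K.subgroupOf L) ≃ₜ ↥(cosetMap hKL ⁻¹' V),
      ∀ x, cosetMap hKL (h x : G ⧸ K) = (x.1 : G ⧸ L) := by
  classical
  set q : G ⧸ K → G ⧸ L := cosetMap hKL with hq
  -- forward map
  have wd : ∀ (v : ↥V) (l l' : ↥L), @Setoid.r _ (QuotientGroup.leftRel (K.subgroupOf L)) l l' →
      (QuotientGroup.mk (s v * l) : G ⧸ K) = QuotientGroup.mk (s v * l') := by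
    intro v l l' hll
    rw [QuotientGroup.leftRel_apply, Subgroup.mem_subgroupOf] at hll
    rw [QuotientGroup.eq]
    simpa [mul_assoc] using hll
  set Φ : ↥V × (↥L ⧸ K.subgroupOf L) → G ⧸ K := fun p =>
    Quotient.liftOn' p.2 (fun l => (QuotientGroup.mk (s p.1 * l) : G ⧸ K)) (wd p.1) with hΦ
  have hqΦ : ∀ p, q (Φ p) = (p.1 : G ⧸ L) := by
    rintro ⟨v, ξ⟩
    induction ξ using Quotient.inductionOn' with
    | h l =>
      show q (QuotientGroup.mk (s v * l)) = _
      rw [hq, cosetMap_mk', ← hsec v, QuotientGroup.eq]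
      simpa using l.2
  -- inverse fiber coordinate
  have memL : ∀ (g : G) (h : (QuotientGroup.mk g : G ⧸ L) ∈ V),
      (s ⟨QuotientGroup.mk g, h⟩)⁻¹ * g ∈ L := by
    intro g h
    rw [← QuotientGroup.eq]
    exact hsec ⟨QuotientGroup.mk g, h⟩
  set sig : G ⧸ K → ↥L ⧸ K.subgroupOf L := fun x => Quotient.liftOn' x
    (fun g => if h : (QuotientGroup.mk g : G ⧸ L) ∈ V
      then (QuotientGroup.mk (⟨(s ⟨QuotientGroup.mk g, h⟩)⁻¹ * g, memL g h⟩ : ↥L) :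
        ↥L ⧸ K.subgroupOf L) else QuotientGroup.mk 1)
    (by
      intro g g' hgg
      rw [QuotientGroup.leftRel_apply] at hgg
      have hL : (QuotientGroup.mk g : G ⧸ L) = QuotientGroup.mk g' :=
        QuotientGroup.eq.mpr (hKL hgg)
      by_cases h : (QuotientGroup.mk g : G ⧸ L) ∈ V
      · have h' : (QuotientGroup.mk g' : G ⧸ L) ∈ V := hL ▸ h
        simp only [dif_pos h, dif_pos h']
        have hv : (⟨QuotientGroup.mk g, h⟩ : ↥V) = ⟨QuotientGroup.mk g', h'⟩ :=
          Subtype.ext hL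
        rw [QuotientGroup.eq, Subgroup.mem_subgroupOf]
        show (((⟨_, memL g h⟩ : ↥L))⁻¹ * ⟨_, memL g' h'⟩ : ↥L).1 ∈ K
        simp only [Subgroup.coe_mul, InvMemClass.coe_inv]
        rw [hv]
        simpa [mul_assoc] using hgg
      · have h' : ¬(QuotientGroup.mk g' : G ⧸ L) ∈ V := hL ▸ h
        simp only [dif_neg h, dif_neg h']) with hsig
  have hsig_mk : ∀ (g : G) (h : (QuotientGroup.mk g : G ⧸ L) ∈ V),
      sig (QuotientGroup.mk g) =
        QuotientGroup.mk (⟨(s ⟨QuotientGroup.mk g, h⟩)⁻¹ * g, memL g h⟩ : ↥L) := by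
    intro g h
    show (if h' : (QuotientGroup.mk g : G ⧸ L) ∈ V then _ else _) = _
    rw [dif_pos h]
  have hmemΦ : ∀ p, Φ p ∈ cosetMap hKL ⁻¹' V := fun p => by
    simp only [Set.mem_preimage, ← hq, hqΦ]; exact p.1.2
  let E : ↥V × (↥L ⧸ K.subgroupOf L) ≃ ↥(cosetMap hKL ⁻¹' V) :=
    { toFun := fun p => ⟨Φ p, hmemΦ p⟩
      invFun := fun y => (⟨q y.1, y.2⟩, sig y.1)
      left_inv := by
        rintro ⟨v, ξ⟩
        induction ξ using Quotient.inductionOn' with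
        | h l =>
          have key : Φ (v, Quotient.mk'' l) = QuotientGroup.mk (s v * l) := rfl
          have h1 : q (QuotientGroup.mk (s v * l)) = (v : G ⧸ L) := hqΦ (v, Quotient.mk'' l)
          have hm : (QuotientGroup.mk (s v * l) : G ⧸ L) ∈ V := by
            rw [show (QuotientGroup.mk (s v * l) : G ⧸ L) = (v : G ⧸ L) from h1]
            exact v.2
          refine Prod.ext (Subtype.ext ?_) ?_
          · show q (Φ (v, Quotient.mk'' l)) = (v : G ⧸ L)
            exact hqΦ _
          · show sig (Φ (v, Quotient.mk'' l)) = Quotient.mk'' l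
            rw [key, hsig_mk _ hm]
            have hv : (⟨QuotientGroup.mk (s v * l), hm⟩ : ↥V) = v := Subtype.ext h1
            exact congrArg QuotientGroup.mk (Subtype.ext (by
              show (s ⟨QuotientGroup.mk (s v * l), hm⟩)⁻¹ * (s v * l) = l
              rw [hv, inv_mul_cancel_left]))
      right_inv := by
        rintro ⟨x, hx⟩
        induction x using Quotient.inductionOn' with
        | h g =>
          have hm : (QuotientGroup.mk g : G ⧸ L) ∈ V := hx
          refine Subtype.ext ?_
          show Φ (⟨q (Quotient.mk'' g), hx⟩, sig (Quotient.mk'' g)) = Quotient.mk'' g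
          have hv : (⟨q (Quotient.mk'' g), hx⟩ : ↥V) = ⟨QuotientGroup.mk g, hm⟩ :=
            Subtype.ext rfl
          rw [hv]
          have : sig (Quotient.mk'' g) =
              QuotientGroup.mk (⟨(s ⟨QuotientGroup.mk g, hm⟩)⁻¹ * g, memL g hm⟩ : ↥L) :=
            hsig_mk g hm
          rw [this]
          show QuotientGroup.mk (s ⟨QuotientGroup.mk g, hm⟩ *
            ((s ⟨QuotientGroup.mk g, hm⟩)⁻¹ * g)) = _
          rw [mul_inv_cancel_left] }
  have contΦ : Continuous Φ := by
    have qm : IsQuotientMap (Prod.map (id : ↥V → ↥V)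
        (QuotientGroup.mk : ↥L → ↥L ⧸ K.subgroupOf L)) :=
      (IsOpenMap.id.prodMap (QuotientGroup.isOpenMap_coe (N := K.subgroupOf L))).isQuotientMap
        (continuous_id.prodMap QuotientGroup.continuous_mk)
        (Function.surjective_id.prodMap QuotientGroup.mk_surjective)
    rw [qm.continuous_iff]
    show Continuous fun p : ↥V × ↥L => (QuotientGroup.mk (s p.1 * p.2) : G ⧸ K)
    exact QuotientGroup.continuous_mk.comp
      ((hs.comp continuous_fst).mul (continuous_subtype_val.comp continuous_snd))
  have contsigW : Continuous fun y : ↥(cosetMap hKL ⁻¹' V) => sig y.1 := by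
    have qm : IsQuotientMap ((cosetMap hKL ⁻¹' V).restrictPreimage
        (QuotientGroup.mk : G → G ⧸ K)) :=
      ((QuotientGroup.isOpenMap_coe (N := K)).restrictPreimage _).isQuotientMap
        QuotientGroup.continuous_mk.restrictPreimage
        ((cosetMap hKL ⁻¹' V).restrictPreimage_surjective QuotientGroup.mk_surjective)
    rw [qm.continuous_iff]
    have key : ∀ z : ↥(QuotientGroup.mk ⁻¹' (cosetMap hKL ⁻¹' V)),
        (QuotientGroup.mk z.1 : G ⧸ L) ∈ V := fun z => z.2
    have heq : ((fun y : ↥(cosetMap hKL ⁻¹' V) => sig y.1) ∘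
        ((cosetMap hKL ⁻¹' V).restrictPreimage (QuotientGroup.mk : G → G ⧸ K)))
        = fun z => QuotientGroup.mk
          (⟨(s ⟨QuotientGroup.mk z.1, key z⟩)⁻¹ * z.1, memL z.1 (key z)⟩ : ↥L) := by
      funext z
      exact hsig_mk z.1 (key z)
    rw [heq]
    apply QuotientGroup.continuous_mk.comp
    apply Continuous.subtype_mk
    exact ((hs.comp (Continuous.subtype_mk
      (QuotientGroup.continuous_mk.comp continuous_subtype_val) _)).inv).mul
      continuous_subtype_val
  have contInv1 : Continuous fun y : ↥(cosetMap hKL ⁻¹' V) => (⟨q y.1, y.2⟩ : ↥V) :=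
    Continuous.subtype_mk ((continuous_cosetMap' hKL).comp continuous_subtype_val) _
  refine ⟨{ toEquiv := E, continuous_toFun := contΦ.subtype_mk _,
            continuous_invFun := contInv1.prodMk contsigW }, fun x => hqΦ x⟩

/-- **Lemma.** Let `G` be a topological group with closed subgroups `K ≤ L ≤ G`.
If the canonical map `G → G/L` admits a local section (a continuous `s : U → G` on a
nonempty open `U ⊆ G/L` with `s(u)L = u`), then the natural map `q : G/K → G/L` is a
locally trivial bundle with fiber `L/K`. -/
theorem locallyTrivial_of_localSection {G : Type*} [Group G] [TopologicalSpace G]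
    [IsTopologicalGroup G] [T2Space G]
    (K L : Subgroup G) (hKcl : IsClosed (K : Set G)) (hLcl : IsClosed (L : Set G))
    (hKL : K ≤ L)
    (hsec : ∃ U : Set (G ⧸ L), IsOpen U ∧ U.Nonempty ∧
      ∃ s : U → G, Continuous s ∧ ∀ u : U, (QuotientGroup.mk (s u) : G ⧸ L) = (u : G ⧸ L)) :
    IsLocallyTrivialWithFiber (↥L ⧸ K.subgroupOf L) (cosetMap hKL) := by
  intro b
  obtain ⟨U, hU, ⟨u₀, hu₀⟩, s, hs, hsec⟩ := hsec
  -- translate the section so that its domain contains `b`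
  set t : G := Quotient.out b * (s ⟨u₀, hu₀⟩)⁻¹ with ht
  set V : Set (G ⧸ L) := t • U with hVdef
  have hVopen : IsOpen V := hU.smul t
  have hbV : b ∈ V := by
    have h0 : (QuotientGroup.mk (s ⟨u₀, hu₀⟩) : G ⧸ L) = u₀ := hsec ⟨u₀, hu₀⟩
    have h1 : t • u₀ = b := by
      rw [← h0, MulAction.Quotient.smul_mk, ht]
      simp only [smul_eq_mul, inv_mul_cancel_right]
      exact QuotientGroup.out_eq' b
    exact h1 ▸ Set.smul_mem_smul_set hu₀
  have hmem : ∀ v : ↥V, t⁻¹ • (v : G ⧸ L) ∈ U := fun v =>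
    Set.mem_smul_set_iff_inv_smul_mem.mp v.2
  set s' : ↥V → G := fun v => t * s ⟨t⁻¹ • (v : G ⧸ L), hmem v⟩ with hs'def
  have hs' : Continuous s' :=
    continuous_const.mul (hs.comp (Continuous.subtype_mk
      ((continuous_const_smul t⁻¹).comp continuous_subtype_val) _))
  have hsec' : ∀ v : ↥V, (QuotientGroup.mk (s' v) : G ⧸ L) = (v : G ⧸ L) := by
    intro v
    have h0 : (QuotientGroup.mk (s ⟨t⁻¹ • (v : G ⧸ L), hmem v⟩) : G ⧸ L)
        = t⁻¹ • (v : G ⧸ L) := hsec ⟨t⁻¹ • (v : G ⧸ L), hmem v⟩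
    show (QuotientGroup.mk (t • s ⟨t⁻¹ • (v : G ⧸ L), hmem v⟩) : G ⧸ L) = (v : G ⧸ L)
    rw [← MulAction.Quotient.smul_mk, h0]
    exact smul_inv_smul t (v : G ⧸ L)
  obtain ⟨h, hh⟩ := triv_of_section K L hKL V hVopen s' hs' hsec'
  exact ⟨V, hVopen, hbV, h, hh⟩
end

section
/- Let $G$ be a topological group with a locally compact closed subgroup $L \subseteq G$, and let $N$ be a closed normal subgroup of $L$. Then the natural right action of $L/N$ on $G/N$ (given by $(gN)\cdot(\ell N) = g\ell N$) is a Cartan action: $G/N$ is completely regular, and every point $x \in G/N$ has an open neighborhood $U$ such that the set $\{h \in L/N \mid (U h) \cap U \neq \emptyset\}$ has compact closure in $L/N$. -/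
open scoped Manifold unitInterval Pointwise

section AuxCartan

open Filter Topology Set
open scoped Pointwise

variable {G : Type*} [Group G] [TopologicalSpace G] [IsTopologicalGroup G]

theorem auxCartan_exists_symm_cube {V : Set G} (hV : V ∈ nhds (1 : G)) :
    ∃ S : Set G, (IsOpen S ∧ (1:G) ∈ S) ∧ (∀ s ∈ S, s⁻¹ ∈ S) ∧
      ∀ a ∈ S, ∀ b ∈ S, ∀ c ∈ S, a * b * c ∈ V := by
  obtain ⟨A, hAo, hA1, hAA⟩ := exists_open_nhds_one_mul_subset hV
  obtain ⟨B, hBo, hB1, hBB⟩ := exists_open_nhds_one_mul_subset (hAo.mem_nhds hA1)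
  have hBA : B ⊆ A := fun b hb => by
    have : b * 1 ∈ B * B := Set.mul_mem_mul hb hB1
    simpa using hBB this
  refine ⟨B ∩ B⁻¹, ⟨hBo.inter hBo.inv, ⟨hB1, by simpa using hB1⟩⟩, ?_, ?_⟩
  · rintro s ⟨h1, h2⟩
    exact ⟨h2, by simpa using h1⟩
  · rintro a ⟨ha, -⟩ b ⟨hb, -⟩ c ⟨hc, -⟩
    have hab : a * b ∈ A := hBB (Set.mul_mem_mul ha hb)
    exact hAA (Set.mul_mem_mul hab (hBA hc))

open scoped NNReal in
theorem auxCartan_completelyRegularSpace_coset (N : Subgroup G) :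
    CompletelyRegularSpace (G ⧸ N) := by
  classical
  constructor
  intro x K hK hxK
  obtain ⟨g, rfl⟩ := QuotientGroup.mk_surjective x
  set C : Set G := QuotientGroup.mk ⁻¹' K with hCdef
  have hCcl : IsClosed C := hK.preimage QuotientGroup.continuous_mk
  have hgC : g ∉ C := hxK
  have hCsat : ∀ c ∈ C, ∀ n ∈ N, c * n ∈ C := by
    intro c hc n hn
    show QuotientGroup.mk (c * n) ∈ K
    rwa [QuotientGroup.mk_mul_of_mem c hn]
  -- the base neighborhood
  set W₀ : Set G := (fun u : G => u * g) ⁻¹' Cᶜ with hW₀def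
  have hW₀o : IsOpen W₀ := hCcl.isOpen_compl.preimage (continuous_id.mul continuous_const)
  have hW₀1 : (1 : G) ∈ W₀ := by simpa [hW₀def] using hgC
  have hW₀ : ∀ u ∈ W₀, u * g ∉ C := fun u hu => hu
  -- recursive sequence of symmetric neighborhoods
  choose! st hst1 hstsymm hstcube using
    fun (V : Set G) (hV : IsOpen V ∧ (1:G) ∈ V) => auxCartan_exists_symm_cube (hV.1.mem_nhds hV.2)
  let U : ℕ → Set G := fun n => Nat.rec (motive := fun _ => Set G) (st W₀) (fun _ V => st V) n
  have hUsucc : ∀ n, U (n + 1) = st (U n) := fun n => rfl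
  have hUbase : ∀ n, IsOpen (U n) ∧ (1 : G) ∈ U n := by
    intro n
    induction n with
    | zero => exact hst1 W₀ ⟨hW₀o, hW₀1⟩
    | succ n ih => exact hst1 (U n) ih
  have hUo : ∀ n, IsOpen (U n) := fun n => (hUbase n).1
  have hU1 : ∀ n, (1 : G) ∈ U n := fun n => (hUbase n).2
  have hUsymm : ∀ n, ∀ s ∈ U n, s⁻¹ ∈ U n := by
    intro n
    cases n with
    | zero => exact hstsymm W₀ ⟨hW₀o, hW₀1⟩
    | succ n => exact hstsymm (U n) (hUbase n)
  have hUcube : ∀ n, ∀ a ∈ U (n+1), ∀ b ∈ U (n+1), ∀ c ∈ U (n+1), a * b * c ∈ U n :=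
    fun n => hstcube (U n) (hUbase n)
  have hU0W : U 0 ⊆ W₀ := by
    intro a ha
    have := hstcube W₀ ⟨hW₀o, hW₀1⟩ a ha 1 (hU1 0) 1 (hU1 0)
    simpa using this
  have hUsub : ∀ n, U (n + 1) ⊆ U n := by
    intro n a ha
    have := hUcube n a ha 1 (hU1 (n+1)) 1 (hU1 (n+1))
    simpa using this
  have hUanti : Antitone U := antitone_nat_of_succ_le hUsub
  -- pre-distance
  let d : G → G → ℝ≥0 :=
    fun a b => ⨅ n : ℕ, (if b * a⁻¹ ∈ U n then ((2:ℝ≥0)⁻¹) ^ (n+1) else 1)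
  have half_lt : ((2:ℝ≥0))⁻¹ < 1 := by
    rw [← NNReal.coe_lt_coe]; push_cast; norm_num
  have htends : Tendsto (fun n : ℕ => ((2:ℝ≥0)⁻¹) ^ (n+1)) atTop (nhds 0) :=
    (NNReal.tendsto_pow_atTop_nhds_zero_of_lt_one half_lt).comp
      (tendsto_add_atTop_nat 1)
  have hzero : ∀ x : ℝ≥0, (∀ n : ℕ, x ≤ ((2:ℝ≥0)⁻¹) ^ (n+1)) → x = 0 := by
    intro x h
    exact le_antisymm (ge_of_tendsto htends (Eventually.of_forall h)) zero_le
  have dle : ∀ (n : ℕ) (a b : G), d a b ≤ (if b * a⁻¹ ∈ U n then ((2:ℝ≥0)⁻¹) ^ (n+1) else 1) :=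
    fun n a b => ciInf_le (OrderBot.bddBelow _) n
  have dmem : ∀ (n : ℕ) (a b : G), b * a⁻¹ ∈ U n → d a b ≤ ((2:ℝ≥0)⁻¹) ^ (n+1) := by
    intro n a b h
    simpa [if_pos h] using dle n a b
  have dself : ∀ a : G, d a a = 0 := by
    intro a
    refine hzero _ fun n => dmem n a a (by simpa using hU1 n)
  have dsymm : ∀ a b : G, d a b = d b a := by
    intro a b
    show ⨅ n : ℕ, _ = ⨅ n : ℕ, _
    refine congrArg _ (funext fun n => ?_)
    have : b * a⁻¹ ∈ U n ↔ a * b⁻¹ ∈ U n := by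
      constructor
      · intro h
        simpa [mul_inv_rev] using hUsymm n _ h
      · intro h
        simpa [mul_inv_rev] using hUsymm n _ h
    simp [this]
  have dle1 : ∀ a b : G, d a b ≤ 1 := by
    intro a b
    refine (dle 0 a b).trans ?_
    split <;> norm_num
  have dlt : ∀ (n : ℕ) (a b : G), d a b < ((2:ℝ≥0)⁻¹) ^ (n+1) → b * a⁻¹ ∈ U (n+1) := by
    intro n a b h
    obtain ⟨m, hm⟩ := exists_lt_of_ciInf_lt h
    by_cases hmem : b * a⁻¹ ∈ U m
    · rw [if_pos hmem] at hm
      have hlt : n + 1 < m + 1 := by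
        have := (pow_lt_pow_iff_right_of_lt_one₀ (a := (2:ℝ≥0)⁻¹) (by positivity) half_lt).1 hm
        exact this
      exact hUanti (Nat.lt_succ_iff.mp hlt) hmem
    · rw [if_neg hmem] at hm
      exact absurd hm (not_lt.2 (pow_le_one₀ zero_le half_lt.le))
  have dquad : ∀ x1 x2 x3 x4 : G,
      d x1 x4 ≤ 2 * max (d x1 x2) (max (d x2 x3) (d x3 x4)) := by
    intro x1 x2 x3 x4
    set m := max (d x1 x2) (max (d x2 x3) (d x3 x4)) with hm
    have key : ∀ n : ℕ, d x1 x2 < ((2:ℝ≥0)⁻¹) ^ (n+1) → d x2 x3 < ((2:ℝ≥0)⁻¹) ^ (n+1) →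
        d x3 x4 < ((2:ℝ≥0)⁻¹) ^ (n+1) → d x1 x4 ≤ ((2:ℝ≥0)⁻¹) ^ (n+1) := by
      intro n h12 h23 h34
      have m12 := dlt n _ _ h12
      have m23 := dlt n _ _ h23
      have m34 := dlt n _ _ h34
      have : x4 * x1⁻¹ ∈ U n := by
        have := hUcube n _ m34 _ m23 _ m12
        have he : x4 * x3⁻¹ * (x3 * x2⁻¹) * (x2 * x1⁻¹) = x4 * x1⁻¹ := by group
        rwa [he] at this
      exact dmem n _ _ this
    by_cases hbig : (2:ℝ≥0)⁻¹ ≤ m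
    · calc d x1 x4 ≤ 1 := dle1 _ _
        _ = 2 * (2:ℝ≥0)⁻¹ := by
            rw [← NNReal.coe_inj]; push_cast; norm_num
        _ ≤ 2 * m := by gcongr
    · push_neg at hbig
      rcases eq_zero_or_pos m with hm0 | hmpos
      · have hall : ∀ n : ℕ, d x1 x4 ≤ ((2:ℝ≥0)⁻¹) ^ (n+1) := by
          intro n
          have hp : (0:ℝ≥0) < ((2:ℝ≥0)⁻¹) ^ (n+1) := by positivity
          refine key n ?_ ?_ ?_
          · exact lt_of_le_of_lt (le_trans (le_max_left _ _) hm0.le) hp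
          · exact lt_of_le_of_lt (le_trans ((le_max_left _ _).trans (le_max_right _ _)) hm0.le) hp
          · exact lt_of_le_of_lt (le_trans ((le_max_right _ _).trans (le_max_right _ _)) hm0.le) hp
        rw [hzero _ hall, hm0, mul_zero]
      · have hex : ∃ k : ℕ, ((2:ℝ≥0)⁻¹) ^ k ≤ m := by
          have := (NNReal.tendsto_pow_atTop_nhds_zero_of_lt_one half_lt).eventually
            (gt_mem_nhds hmpos)
          exact this.exists.imp fun k hk => hk.le
        have hk : ((2:ℝ≥0)⁻¹) ^ (Nat.find hex) ≤ m := Nat.find_spec hex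
        set k := Nat.find hex with hkdef
        have hk2 : 2 ≤ k := by
          by_contra hcon
          push_neg at hcon
          interval_cases k
          · simp only [pow_zero] at hk
            exact absurd (hk.trans_lt hbig) (not_lt.2 half_lt.le)
          · simp only [pow_one] at hk
            exact absurd hk (not_le.2 hbig)
        have hklt : m < ((2:ℝ≥0)⁻¹) ^ (k - 1) := by
          have hmin := Nat.find_min hex (m := k - 1) (by omega)
          exact not_le.1 hmin
        have e1 : k - 2 + 1 = k - 1 := by omega
        have hle : d x1 x4 ≤ ((2:ℝ≥0)⁻¹) ^ (k - 1) := by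
          rw [← e1]
          refine key (k - 2) ?_ ?_ ?_
          · exact lt_of_le_of_lt (le_max_left _ _) (by rwa [e1])
          · exact lt_of_le_of_lt ((le_max_left _ _).trans (le_max_right _ _)) (by rwa [e1])
          · exact lt_of_le_of_lt ((le_max_right _ _).trans (le_max_right _ _)) (by rwa [e1])
        have e2 : ((2:ℝ≥0)⁻¹) ^ (k - 1) = 2 * ((2:ℝ≥0)⁻¹) ^ k := by
          have hk1 : k = (k - 1) + 1 := by omega
          have h2 : (2:ℝ≥0) * 2⁻¹ = 1 := by rw [← NNReal.coe_inj]; push_cast; norm_num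
          calc ((2:ℝ≥0)⁻¹) ^ (k - 1) = ((2:ℝ≥0)⁻¹) ^ (k - 1) * (2 * 2⁻¹) := by
                rw [h2, mul_one]
            _ = 2 * (((2:ℝ≥0)⁻¹) ^ (k - 1) * 2⁻¹) := by ring
            _ = 2 * ((2:ℝ≥0)⁻¹) ^ ((k - 1) + 1) := by rw [pow_succ]
            _ = 2 * ((2:ℝ≥0)⁻¹) ^ k := by rw [← hk1]
        calc d x1 x4 ≤ ((2:ℝ≥0)⁻¹) ^ (k - 1) := hle
          _ = 2 * ((2:ℝ≥0)⁻¹) ^ k := e2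
          _ ≤ 2 * m := by gcongr
  -- the induced pseudometric
  let M : PseudoMetricSpace G := PseudoMetricSpace.ofPreNNDist d dself dsymm
  let ρ : G → G → ℝ := fun a b => @dist G M.toDist a b
  have ρ_le : ∀ a b : G, ρ a b ≤ (d a b : ℝ) := fun a b =>
    PseudoMetricSpace.dist_ofPreNNDist_le d dself dsymm a b
  have two_ρ : ∀ a b : G, (d a b : ℝ) ≤ 2 * ρ a b := fun a b =>
    PseudoMetricSpace.le_two_mul_dist_ofPreNNDist d dself dsymm dquad a b
  have ρ_self : ∀ a : G, ρ a a = 0 := fun a => @dist_self G M a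
  have ρ_tri : ∀ a b c : G, ρ a c ≤ ρ a b + ρ b c := fun a b c => @dist_triangle G M a b c
  have ρ_nonneg : ∀ a b : G, 0 ≤ ρ a b := fun a b => @dist_nonneg G M a b
  have d_rinv : ∀ a b c : G, d (a * c) (b * c) = d a b := by
    intro a b c
    show (⨅ n : ℕ, _ : ℝ≥0) = ⨅ n : ℕ, _
    refine congrArg _ (funext fun n => ?_)
    have he : b * c * (a * c)⁻¹ = b * a⁻¹ := by group
    rw [he]
  -- the separating function upstairs
  haveI : Nonempty ↥N := ⟨1⟩
  let F : G → ℝ := fun y => ⨅ n : ↥N, ρ g (y * (n : G))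
  have Fbdd : ∀ y : G, BddBelow (Set.range fun n : ↥N => ρ g (y * (n : G))) := fun y =>
    ⟨0, by rintro r ⟨n, rfl⟩; exact ρ_nonneg _ _⟩
  have F_le : ∀ (y : G) (n : ↥N), F y ≤ ρ g (y * (n : G)) := fun y n => ciInf_le (Fbdd y) n
  have F_nonneg : ∀ y : G, 0 ≤ F y := fun y => Real.iInf_nonneg fun n => ρ_nonneg _ _
  have F_g : F g = 0 := by
    refine le_antisymm ?_ (F_nonneg g)
    have := F_le g 1
    simpa [ρ_self] using this
  have F_inv : ∀ (y : G) (n₀ : ↥N), F (y * (n₀ : G)) = F y := by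
    intro y n₀
    apply le_antisymm
    · refine le_ciInf fun n => ?_
      refine (F_le (y * (n₀ : G)) (n₀⁻¹ * n)).trans_eq ?_
      congr 1
      push_cast
      group
    · refine le_ciInf fun n => ?_
      refine (F_le y (n₀ * n)).trans_eq ?_
      congr 1
      push_cast
      group
  have F_lip : ∀ y y' : G, F y ≤ F y' + (d y' y : ℝ) := by
    intro y y'
    rw [← sub_le_iff_le_add]
    refine le_ciInf fun n => ?_
    rw [sub_le_iff_le_add]
    calc F y ≤ ρ g (y * (n : G)) := F_le _ _
      _ ≤ ρ g (y' * (n : G)) + ρ (y' * (n : G)) (y * (n : G)) := ρ_tri _ _ _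
      _ ≤ ρ g (y' * (n : G)) + (d (y' * (n : G)) (y * (n : G)) : ℝ) := by
          exact add_le_add_right (ρ_le _ _) _
      _ = ρ g (y' * (n : G)) + (d y' y : ℝ) := by rw [d_rinv]
  have F_cont : Continuous F := by
    rw [continuous_iff_continuousAt]
    intro y₀
    rw [ContinuousAt, Metric.tendsto_nhds]
    intro ε hε
    obtain ⟨n, hn⟩ := exists_pow_lt_of_lt_one hε (by norm_num : (2:ℝ)⁻¹ < 1)
    have hopen : IsOpen {y : G | y * y₀⁻¹ ∈ U n} :=
      (hUo n).preimage (continuous_id.mul continuous_const)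
    have hmem : {y : G | y * y₀⁻¹ ∈ U n} ∈ nhds y₀ :=
      hopen.mem_nhds (by simpa using hU1 n)
    filter_upwards [hmem] with y hy
    have hd1 : d y₀ y ≤ ((2:ℝ≥0)⁻¹) ^ (n+1) := dmem n _ _ hy
    have hdy : (d y₀ y : ℝ) < ε := by
      have h1 : (d y₀ y : ℝ) ≤ ((2:ℝ)⁻¹) ^ (n+1) := by
        calc (d y₀ y : ℝ) ≤ (((2:ℝ≥0)⁻¹) ^ (n+1) : ℝ≥0) := by exact_mod_cast hd1
          _ = ((2:ℝ)⁻¹) ^ (n+1) := by push_cast; ring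
      refine h1.trans_lt (lt_of_le_of_lt ?_ hn)
      calc ((2:ℝ)⁻¹) ^ (n+1) = ((2:ℝ)⁻¹) ^ n * 2⁻¹ := pow_succ _ _
        _ ≤ ((2:ℝ)⁻¹) ^ n * 1 := by gcongr; norm_num
        _ = ((2:ℝ)⁻¹) ^ n := mul_one _
    rw [Real.dist_eq, abs_sub_lt_iff]
    constructor
    · have h1 := F_lip y y₀
      linarith
    · have h2 := F_lip y₀ y
      rw [dsymm y y₀] at *
      linarith
  have F_half : ∀ c ∈ C, (2:ℝ)⁻¹ ≤ F c := by
    intro c hc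
    refine le_ciInf fun n => ?_
    have hcn : c * (n : G) ∈ C := hCsat c hc _ n.2
    have hd1 : d g (c * (n : G)) = 1 := by
      have hterm : ∀ m : ℕ, (if (c * (n : G)) * g⁻¹ ∈ U m then ((2:ℝ≥0)⁻¹) ^ (m+1) else 1) = 1 := by
        intro m
        rw [if_neg]
        intro hmm
        have h0 : (c * (n : G)) * g⁻¹ ∈ W₀ := hU0W (hUanti (Nat.zero_le m) hmm)
        have := hW₀ _ h0
        rw [inv_mul_cancel_right] at this
        exact this hcn
      show (⨅ m : ℕ, _ : ℝ≥0) = 1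
      rw [funext hterm]
      exact ciInf_const
    have h2 := two_ρ g (c * (n : G))
    rw [hd1] at h2
    push_cast at h2
    linarith
  -- descend to the quotient
  have wd : ∀ a b : G, @Setoid.r G (QuotientGroup.leftRel N) a b → F a = F b := by
    intro a b hab
    rw [QuotientGroup.leftRel_apply] at hab
    have hb : b = a * ((⟨a⁻¹ * b, hab⟩ : ↥N) : G) := (mul_inv_cancel_left a b).symm
    rw [hb, F_inv]
  let Fq : G ⧸ N → ℝ := fun q => Quotient.liftOn' q F wd
  have Fq_mk : ∀ y : G, Fq (QuotientGroup.mk y) = F y := fun y => rfl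
  have Fq_cont : Continuous Fq := by
    rw [(QuotientGroup.isQuotientMap_mk N).continuous_iff]
    exact F_cont
  have Fq_nonneg : ∀ q, 0 ≤ Fq q := by
    intro q
    induction q using Quotient.inductionOn'
    exact F_nonneg _
  refine ⟨fun q => ⟨min (2 * Fq q) 1, ⟨le_min (mul_nonneg (by norm_num) (Fq_nonneg q)) zero_le_one, min_le_right _ _⟩⟩,
    ?_, ?_, ?_⟩
  · exact Continuous.subtype_mk ((continuous_const.mul Fq_cont).min continuous_const) _
  · apply Subtype.ext
    show min (2 * Fq (QuotientGroup.mk g)) 1 = 0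
    rw [Fq_mk, F_g]
    norm_num
  · intro k hk
    obtain ⟨c, rfl⟩ := QuotientGroup.mk_surjective k
    have hcC : c ∈ C := hk
    apply Subtype.ext
    show min (2 * Fq (QuotientGroup.mk c)) 1 = 1
    rw [Fq_mk]
    have := F_half c hcC
    rw [min_eq_right (by linarith)]

end AuxCartan

/-- **Lemma.** Let `G` be a topological group with a locally compact closed subgroup `L`,
and let `N` be a closed normal subgroup of `L`. Then the natural right action of `L/N`
on `G/N`, given by `(gN)·(ℓN) = gℓN`, is a Cartan action: it is a continuous action,
`G/N` is completely regular, and every point of `G/N` has an open neighborhood `U` such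
that `{h ∈ L/N | (U·h) ∩ U ≠ ∅}` has compact closure in `L/N`. -/
theorem cartan_action_of_quotient {G : Type*} [Group G] [TopologicalSpace G]
    [IsTopologicalGroup G] [T2Space G]
    (L N : Subgroup G) (hLcl : IsClosed (L : Set G)) [LocallyCompactSpace L]
    (hNL : N ≤ L) (hNcl : IsClosed (N : Set G)) [hnorm : (N.subgroupOf L).Normal] :
    ∃ act : G ⧸ N → (↥L ⧸ N.subgroupOf L) → G ⧸ N,
      (∀ (g : G) (l : L),
        act (QuotientGroup.mk g) (QuotientGroup.mk l) = QuotientGroup.mk (g * l)) ∧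
      Continuous (fun p : (G ⧸ N) × (↥L ⧸ N.subgroupOf L) => act p.1 p.2) ∧
      CompletelyRegularSpace (G ⧸ N) ∧
      ∀ x : G ⧸ N, ∃ U : Set (G ⧸ N), IsOpen U ∧ x ∈ U ∧
        IsCompact (closure {h : ↥L ⧸ N.subgroupOf L | ∃ u ∈ U, act u h ∈ U}) := by
  classical
  haveI : IsClosed ((N.subgroupOf L : Subgroup L) : Set L) := by
    have : ((N.subgroupOf L : Subgroup L) : Set L) = Subtype.val ⁻¹' (N : Set G) := by
      ext a; simp [Subgroup.mem_subgroupOf]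
    rw [this]
    exact hNcl.preimage continuous_subtype_val
  have wd : ∀ (g₁ : G) (l₁ : L) (g₂ : G) (l₂ : L),
      @Setoid.r G (QuotientGroup.leftRel N) g₁ g₂ →
      @Setoid.r L (QuotientGroup.leftRel (N.subgroupOf L)) l₁ l₂ →
      (QuotientGroup.mk (g₁ * (l₁ : G)) : G ⧸ N) = QuotientGroup.mk (g₂ * (l₂ : G)) := by
    intro g₁ l₁ g₂ l₂ h1 h2
    rw [QuotientGroup.leftRel_apply] at h1 h2
    rw [QuotientGroup.eq]
    have hmem : (⟨g₁⁻¹ * g₂, hNL h1⟩ : L) ∈ N.subgroupOf L := by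
      rw [Subgroup.mem_subgroupOf]; exact h1
    have hconj := hnorm.conj_mem _ hmem l₁⁻¹
    rw [Subgroup.mem_subgroupOf] at hconj
    have hn2 : ((l₁⁻¹ * l₂ : L) : G) ∈ N := h2
    have he : (g₁ * (l₁ : G))⁻¹ * (g₂ * (l₂ : G)) =
        ((l₁⁻¹ * ⟨g₁⁻¹ * g₂, hNL h1⟩ * l₁⁻¹⁻¹ : L) : G) * ((l₁⁻¹ * l₂ : L) : G) := by
      push_cast
      group
    rw [he]
    exact N.mul_mem hconj hn2
  refine ⟨fun q h => Quotient.liftOn₂' q h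
      (fun g l => QuotientGroup.mk (g * (l : G))) wd, fun g l => rfl, ?_, ?_, ?_⟩
  · -- continuity
    have hq := (QuotientGroup.isOpenQuotientMap_mk (N := N)).prodMap
      (QuotientGroup.isOpenQuotientMap_mk (N := N.subgroupOf L))
    apply hq.isQuotientMap.continuous_iff.mpr
    show Continuous fun p : G × ↥L => (QuotientGroup.mk (p.1 * (p.2 : G)) : G ⧸ N)
    exact QuotientGroup.continuous_mk.comp
      (continuous_fst.mul (continuous_subtype_val.comp continuous_snd))
  · exact auxCartan_completelyRegularSpace_coset N
  · intro x
    obtain ⟨g, rfl⟩ := QuotientGroup.mk_surjective x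
    obtain ⟨K, hKc, hKn⟩ := exists_compact_mem_nhds (1 : L)
    rw [nhds_subtype_eq_comap] at hKn
    obtain ⟨W, hW, hWK⟩ := hKn
    rw [OneMemClass.coe_one] at hW
    obtain ⟨S, ⟨hSo, hS1⟩, hSsymm, hScube⟩ := auxCartan_exists_symm_cube hW
    have hSS : ∀ a ∈ S, ∀ b ∈ S, a * b ∈ W := fun a ha b hb => by
      simpa using hScube a ha b hb 1 hS1
    refine ⟨QuotientGroup.mk '' ((fun s => g * s) '' S), ?_, ?_, ?_⟩
    · exact (QuotientGroup.isOpenQuotientMap_mk (N := N)).isOpenMap _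
        ((isOpenMap_mul_left g) S hSo)
    · exact ⟨g * 1, ⟨1, hS1, rfl⟩, by rw [mul_one]⟩
    · have hcomp : IsCompact (QuotientGroup.mk '' K : Set (↥L ⧸ N.subgroupOf L)) :=
        hKc.image QuotientGroup.continuous_mk
      have hsub : {h : ↥L ⧸ N.subgroupOf L | ∃ u ∈ QuotientGroup.mk '' ((fun s => g * s) '' S),
          Quotient.liftOn₂' u h (fun g l => QuotientGroup.mk (g * (l : G))) wd ∈
            QuotientGroup.mk '' ((fun s => g * s) '' S)} ⊆
          QuotientGroup.mk '' K := by
        rintro h ⟨u, hu, hact⟩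
        obtain ⟨l, rfl⟩ := QuotientGroup.mk_surjective h
        obtain ⟨-, ⟨s, hs, rfl⟩, rfl⟩ := hu
        obtain ⟨-, ⟨s', hs', rfl⟩, heq⟩ := hact
        have heq' : (QuotientGroup.mk (g * s') : G ⧸ N) = QuotientGroup.mk (g * s * (l : G)) :=
          heq
        rw [QuotientGroup.eq] at heq'
        set n : G := (g * s')⁻¹ * (g * s * (l : G)) with hn
        have hnN : n ∈ N := heq'
        have hnL : n ∈ L := hNL hnN
        set nL : L := ⟨n, hnL⟩ with hnLdef
        have hmG : ((l * nL⁻¹ : L) : G) = s⁻¹ * s' := by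
          push_cast [hnLdef, hn]
          group
        have hmW : (l * nL⁻¹ : L) ∈ K := by
          apply hWK
          show ((l * nL⁻¹ : L) : G) ∈ W
          rw [hmG]
          exact hSS _ (hSsymm s hs) _ hs'
        refine ⟨l * nL⁻¹, hmW, ?_⟩
        have : nL ∈ N.subgroupOf L := by rw [Subgroup.mem_subgroupOf]; exact hnN
        calc (QuotientGroup.mk (l * nL⁻¹) : ↥L ⧸ N.subgroupOf L)
            = QuotientGroup.mk (l * nL⁻¹ * nL) := by
              rw [QuotientGroup.mk_mul_of_mem _ this]
          _ = QuotientGroup.mk l := by rw [inv_mul_cancel_right]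
      exact hcomp.of_isClosed_subset isClosed_closure
        (closure_minimal hsub hcomp.isClosed)
end

section
/- Let $G = \mathrm{SU}(2)^{\mathbb{N}}$ be the countable product of copies of the compact Lie group $\mathrm{SU}(2)$, and let $L = \{\pm 1\}^{\mathbb{N}} \subseteq G$ be its center. Then the quotient map $q : G \to G/L$ does not admit a local section, and in particular $q$ is not a locally trivial bundle. -/
open scoped Manifold unitInterval Pointwise

/-- The special unitary group `SU(2)`, as the subgroup of the unitary group
`U(2) ⊆ M₂(ℂ)` consisting of matrices of determinant `1`. -/
def SU2 : Subgroup (Matrix.unitaryGroup (Fin 2) ℂ) where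
  carrier := {A | (A : Matrix (Fin 2) (Fin 2) ℂ).det = 1}
  one_mem' := by simp
  mul_mem' := by
    intro a b ha hb
    simp only [Set.mem_setOf_eq] at *
    rw [Matrix.UnitaryGroup.mul_val, Matrix.det_mul, ha, hb, mul_one]
  inv_mem' := by
    intro a ha
    simp only [Set.mem_setOf_eq] at *
    rw [Matrix.UnitaryGroup.inv_val, Matrix.star_eq_conjTranspose,
      Matrix.det_conjTranspose, ha, star_one]


noncomputable section NoSecAux

namespace NoSecAux

instance : ContinuousMul ↥SU2 := SU2.toSubmonoid.continuousMul

/-- The underlying `2×2` matrix of an element of `SU2`. -/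
def mval (A : SU2) : Matrix (Fin 2) (Fin 2) ℂ :=
  ((A : Matrix.unitaryGroup (Fin 2) ℂ) : Matrix (Fin 2) (Fin 2) ℂ)

lemma mval_mul (A B : SU2) : mval (A * B) = mval A * mval B := by
  unfold mval; norm_cast

lemma mval_det (A : SU2) : (mval A).det = 1 := A.2

lemma mval_inv (A : SU2) : mval A⁻¹ = star (mval A) := by
  unfold mval
  rw [← Matrix.UnitaryGroup.inv_val]
  norm_cast

lemma star_mval_mul_self (A : SU2) : star (mval A) * mval A = 1 :=
  Matrix.mem_unitaryGroup_iff'.mp A.1.2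

def rmat (a b : ℝ) : Matrix (Fin 2) (Fin 2) ℂ := !![(a:ℂ), (b:ℂ); -(b:ℂ), (a:ℂ)]

lemma rmat_star (a b : ℝ) : star (rmat a b) = rmat a (-b) := by
  rw [Matrix.star_eq_conjTranspose]
  ext i j
  fin_cases i <;> fin_cases j <;>
    simp [rmat, Matrix.conjTranspose_apply, Complex.conj_ofReal]

lemma rmat_mem_unitary {a b : ℝ} (h : a^2 + b^2 = 1) :
    rmat a b ∈ Matrix.unitaryGroup (Fin 2) ℂ := by
  rw [Matrix.mem_unitaryGroup_iff, rmat_star]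
  have h' : (a:ℂ)^2 + (b:ℂ)^2 = 1 := by exact_mod_cast h
  ext i j
  rw [rmat, rmat]
  fin_cases i <;> fin_cases j <;>
    simp [Matrix.mul_fin_two, Matrix.one_fin_two] <;> first | linear_combination h' | ring

lemma rmat_det {a b : ℝ} (h : a^2 + b^2 = 1) : (rmat a b).det = 1 := by
  have h' : (a:ℂ)^2 + (b:ℂ)^2 = 1 := by exact_mod_cast h
  rw [rmat, Matrix.det_fin_two_of]
  linear_combination h'

/-- A path in `SU2` from `1` to `-1`. -/
def rot (t : ℝ) : SU2 :=
  ⟨⟨rmat (Real.cos (Real.pi * t)) (Real.sin (Real.pi * t)),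
    rmat_mem_unitary (Real.cos_sq_add_sin_sq _)⟩,
    rmat_det (Real.cos_sq_add_sin_sq _)⟩

lemma rot_zero : rot 0 = 1 := by
  apply Subtype.ext; apply Subtype.ext
  show rmat _ _ = 1
  rw [rmat, Matrix.one_fin_two]
  norm_num

lemma mval_rot_one : mval (rot 1) = -1 := by
  show rmat _ _ = -1
  rw [rmat, Matrix.one_fin_two]
  ext i j
  fin_cases i <;> fin_cases j <;> norm_num

lemma rmat_smul (a b : ℝ) : rmat a b = (a:ℂ) • (1 : Matrix (Fin 2) (Fin 2) ℂ)
    + (b:ℂ) • !![0, 1; -1, 0] := by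
  rw [rmat, Matrix.one_fin_two]
  ext i j
  fin_cases i <;> fin_cases j <;> simp

lemma continuous_rot : Continuous rot := by
  apply Continuous.subtype_mk
  apply Continuous.subtype_mk
  show Continuous fun t => rmat (Real.cos (Real.pi * t)) (Real.sin (Real.pi * t))
  simp only [rmat_smul]
  exact ((Complex.continuous_ofReal.comp
      (Real.continuous_cos.comp (continuous_const.mul continuous_id))).smul
      continuous_const).add
    ((Complex.continuous_ofReal.comp
      (Real.continuous_sin.comp (continuous_const.mul continuous_id))).smul
      continuous_const)

def Bmat : Matrix (Fin 2) (Fin 2) ℂ := !![Complex.I, 0; 0, -Complex.I]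

lemma Bmat_mem_unitary : Bmat ∈ Matrix.unitaryGroup (Fin 2) ℂ := by
  rw [Matrix.mem_unitaryGroup_iff]
  have : star Bmat = !![-Complex.I, 0; 0, Complex.I] := by
    rw [Matrix.star_eq_conjTranspose]
    ext i j
    fin_cases i <;> fin_cases j <;> simp [Bmat]
  rw [this, Bmat, Matrix.mul_fin_two, Matrix.one_fin_two]
  norm_num [Complex.I_mul_I]

def Bsu : SU2 := ⟨⟨Bmat, Bmat_mem_unitary⟩, by
  show Bmat.det = 1
  rw [Bmat, Matrix.det_fin_two_of]
  simp [Complex.I_mul_I]⟩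

def Cmat : Matrix (Fin 2) (Fin 2) ℂ := !![0, 1; -1, 0]

lemma Cmat_mem_unitary : Cmat ∈ Matrix.unitaryGroup (Fin 2) ℂ := by
  rw [Matrix.mem_unitaryGroup_iff]
  have : star Cmat = !![0, -1; 1, 0] := by
    rw [Matrix.star_eq_conjTranspose]
    ext i j
    fin_cases i <;> fin_cases j <;> simp [Cmat]
  rw [this, Cmat, Matrix.mul_fin_two, Matrix.one_fin_two]
  norm_num

def Csu : SU2 := ⟨⟨Cmat, Cmat_mem_unitary⟩, by
  show Cmat.det = 1
  rw [Cmat, Matrix.det_fin_two_of]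
  norm_num⟩

/-- An element of the center of `SU2` has `(0,0)` entry `±1`. -/
lemma center_entries {A : SU2} (hA : A ∈ Subgroup.center SU2) :
    mval A 0 0 = 1 ∨ mval A 0 0 = -1 := by
  have hB : mval Bsu * mval A = mval A * mval Bsu := by
    rw [← mval_mul, ← mval_mul, (Subgroup.mem_center_iff.mp hA) Bsu]
  have hC : mval Csu * mval A = mval A * mval Csu := by
    rw [← mval_mul, ← mval_mul, (Subgroup.mem_center_iff.mp hA) Csu]
  have hBv : mval Bsu = Bmat := rfl
  have hCv : mval Csu = Cmat := rfl
  rw [hBv] at hB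
  rw [hCv] at hC
  set M := mval A with hMdef
  have e01 : (Bmat * M) 0 1 = (M * Bmat) 0 1 := by rw [hB]
  have e10 : (Bmat * M) 1 0 = (M * Bmat) 1 0 := by rw [hB]
  have f01 : (Cmat * M) 0 1 = (M * Cmat) 0 1 := by rw [hC]
  simp [Bmat, Cmat, Matrix.mul_apply, Fin.sum_univ_two] at e01 e10 f01
  have hb : M 0 1 = 0 := by
    linear_combination (-Complex.I / 2) * e01 + (M 0 1) * Complex.I_sq
  have hc : M 1 0 = 0 := by
    linear_combination (Complex.I / 2) * e10 + (M 1 0) * Complex.I_sq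
  have hdet : M 0 0 * M 1 1 - M 0 1 * M 1 0 = 1 := by
    rw [← Matrix.det_fin_two]; exact mval_det A
  rw [hb, hc, f01] at hdet
  simp at hdet
  exact mul_self_eq_one_iff.mp hdet

lemma mem_center_of_mval_neg_one {A : SU2} (hA : mval A = -1) :
    A ∈ Subgroup.center SU2 := by
  rw [Subgroup.mem_center_iff]
  intro g
  apply Subtype.ext; apply Subtype.ext
  show mval (g * A) = mval (A * g)
  rw [mval_mul, mval_mul, hA, mul_neg_one, neg_one_mul]

lemma rot_one_mem_center : rot 1 ∈ Subgroup.center SU2 :=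
  mem_center_of_mval_neg_one mval_rot_one

/-- In a product group, each coordinate of a central element is central. -/
lemma coord_center {z : ℕ → SU2} (hz : z ∈ Subgroup.center (ℕ → SU2)) (n : ℕ) :
    z n ∈ Subgroup.center SU2 := by
  rw [Subgroup.mem_center_iff]
  intro x
  have h := congrFun ((Subgroup.mem_center_iff.mp hz) (Function.update 1 n x)) n
  simpa using h

/-- The key step: no nonempty open subset of the quotient admits a continuous section. -/
theorem no_section :
    ¬ ∃ U : Set ((ℕ → SU2) ⧸ Subgroup.center (ℕ → SU2)), IsOpen U ∧ U.Nonempty ∧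
      ∃ s : U → (ℕ → SU2), Continuous s ∧
        ∀ u : U, (QuotientGroup.mk (s u) : (ℕ → SU2) ⧸ Subgroup.center (ℕ → SU2)) =
          (u : (ℕ → SU2) ⧸ Subgroup.center (ℕ → SU2)) := by
  rintro ⟨U, hUopen, ⟨u₀, hu₀⟩, s, hs_cont, hs⟩
  set q : (ℕ → SU2) → (ℕ → SU2) ⧸ Subgroup.center (ℕ → SU2) := QuotientGroup.mk with hq
  have hq_cont : Continuous q := continuous_quotient_mk'
  set g₀ : ℕ → SU2 := s ⟨u₀, hu₀⟩ with hg₀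
  have hqg₀ : q g₀ = u₀ := hs ⟨u₀, hu₀⟩
  have hpre : IsOpen (q ⁻¹' U) := hUopen.preimage hq_cont
  have hg₀mem : g₀ ∈ q ⁻¹' U := by
    simp only [Set.mem_preimage, hqg₀]; exact hu₀
  obtain ⟨F, v, hv, hsub⟩ := isOpen_pi_iff.mp hpre g₀ hg₀mem
  obtain ⟨n, hn⟩ := Infinite.exists_notMem_finset F
  -- the path in `G` rotating the `n`-th coordinate from `g₀ n` to `-(g₀ n)`
  set Γ : I → (ℕ → SU2) := fun t => Function.update g₀ n (g₀ n * rot (t : ℝ)) with hΓ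
  have hΓcont : Continuous Γ := by
    apply continuous_pi
    intro j
    by_cases hj : j = n
    · subst hj
      simp only [hΓ, Function.update_self]
      exact continuous_const.mul (continuous_rot.comp continuous_subtype_val)
    · simp only [hΓ, Function.update_of_ne hj]
      exact continuous_const
  have hΓmem : ∀ t, Γ t ∈ q ⁻¹' U := by
    intro t
    apply hsub
    intro i hi
    have hine : i ≠ n := fun h => hn (h ▸ hi)
    have hval : Γ t i = g₀ i := Function.update_of_ne hine _ _
    rw [hval]
    exact (hv i hi).2
  set sp : I → (ℕ → SU2) := fun t => s ⟨q (Γ t), hΓmem t⟩ with hsp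
  have hspcont : Continuous sp :=
    hs_cont.comp (Continuous.subtype_mk (hq_cont.comp hΓcont) _)
  have hspq : ∀ t, q (sp t) = q (Γ t) := fun t => hs _
  have hcentral : ∀ t, (sp t)⁻¹ * Γ t ∈ Subgroup.center (ℕ → SU2) := fun t =>
    QuotientGroup.eq.mp (hspq t)
  -- the real-valued test function
  set h : I → ℝ := fun t => ((star (mval (sp t n)) * mval (Γ t n)) 0 0).re with hh
  have hrepr : ∀ t, star (mval (sp t n)) * mval (Γ t n) = mval (((sp t)⁻¹ * Γ t) n) := by
    intro t
    have hcoord : ((sp t)⁻¹ * Γ t) n = (sp t n)⁻¹ * (Γ t n) := rfl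
    rw [hcoord, mval_mul, mval_inv]
  have hhcont : Continuous h := by
    apply Complex.continuous_re.comp
    have h1 : Continuous fun t : I => mval (sp t n) :=
      continuous_subtype_val.comp
        (continuous_subtype_val.comp ((continuous_apply n).comp hspcont))
    have h2 : Continuous fun t : I => mval (Γ t n) :=
      continuous_subtype_val.comp
        (continuous_subtype_val.comp ((continuous_apply n).comp hΓcont))
    exact (continuous_apply (0 : Fin 2)).comp
      ((continuous_apply (0 : Fin 2)).comp (h1.star.matrix_mul h2))
  have hvals : ∀ t, h t = 1 ∨ h t = -1 := by
    intro t
    have hc : (((sp t)⁻¹ * Γ t) n) ∈ Subgroup.center SU2 :=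
      coord_center (hcentral t) n
    rcases center_entries hc with h1 | h1
    · left
      simp only [hh, hrepr t, h1]
      norm_num
    · right
      simp only [hh, hrepr t, h1]
      norm_num
  -- endpoint values
  have hΓ0 : Γ 0 = g₀ := by
    have hco : ((0 : I) : ℝ) = 0 := rfl
    rw [hΓ]
    simp only [hco, rot_zero, mul_one, Function.update_eq_self]
  have hsp0 : sp 0 = g₀ := by
    have hqΓ0 : q (Γ 0) = u₀ := by rw [hΓ0]; exact hqg₀
    exact congrArg s (Subtype.ext hqΓ0)
  have h0 : h 0 = 1 := by
    simp only [hh, hsp0, hΓ0, star_mval_mul_self]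
    rw [Matrix.one_apply_eq]
    norm_num
  have hε : Function.update (1 : ℕ → SU2) n (rot 1) ∈ Subgroup.center (ℕ → SU2) := by
    rw [Subgroup.mem_center_iff]
    intro g
    funext j
    by_cases hj : j = n
    · subst hj
      simp only [Pi.mul_apply, Function.update_self]
      exact (Subgroup.mem_center_iff.mp rot_one_mem_center) (g j)
    · simp only [Pi.mul_apply, Function.update_of_ne hj, Pi.one_apply, mul_one, one_mul]
  have hco1 : ((1 : I) : ℝ) = 1 := rfl
  have hΓ1 : Γ 1 = g₀ * Function.update (1 : ℕ → SU2) n (rot 1) := by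
    funext j
    by_cases hj : j = n
    · subst hj
      simp [hΓ, hco1, Function.update_self]
    · simp [hΓ, Function.update_of_ne hj]
  have hsp1 : sp 1 = g₀ := by
    have hqΓ1 : q (Γ 1) = u₀ := by
      rw [hΓ1, hq, QuotientGroup.mk_mul_of_mem g₀ hε]
      exact hqg₀
    exact congrArg s (Subtype.ext hqΓ1)
  have h1 : h 1 = -1 := by
    have hΓ1n : Γ 1 n = g₀ n * rot 1 := by
      simp [hΓ, hco1, Function.update_self]
    simp only [hh, hsp1, hΓ1n, mval_mul, mval_rot_one]
    rw [mul_neg_one, mul_neg, star_mval_mul_self]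
    simp [Matrix.neg_apply, Matrix.one_apply_eq]
  -- intermediate value theorem
  have hmem : (0 : ℝ) ∈ Set.Icc (h 1) (h 0) := by
    rw [h0, h1]
    norm_num
  obtain ⟨t, ht⟩ := intermediate_value_univ (1 : I) (0 : I) hhcont hmem
  rcases hvals t with e | e <;> rw [ht] at e <;> norm_num at e

end NoSecAux
end NoSecAux

/-- **Example.** Let `G = SU(2)^ℕ` and let `L` be its center (the compact totally
disconnected group `{±1}^ℕ`). Then the quotient map `q : G → G/L` does not admit a
local section, and in particular `q` is not a locally trivial bundle. -/
theorem no_local_section_SU2_pow_nat :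
    (¬ ∃ U : Set ((ℕ → SU2) ⧸ Subgroup.center (ℕ → SU2)), IsOpen U ∧ U.Nonempty ∧
      ∃ s : U → (ℕ → SU2), Continuous s ∧
        ∀ u : U, (QuotientGroup.mk (s u) : (ℕ → SU2) ⧸ Subgroup.center (ℕ → SU2)) =
          (u : (ℕ → SU2) ⧸ Subgroup.center (ℕ → SU2))) ∧
    ¬ IsLocallyTrivial
        (QuotientGroup.mk : (ℕ → SU2) → (ℕ → SU2) ⧸ Subgroup.center (ℕ → SU2)) := by
  constructor
  · exact NoSecAux.no_section
  · intro hlt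
    obtain ⟨V, hVopen, hbV, e, he⟩ := hlt (QuotientGroup.mk (1 : ℕ → SU2))
    exact NoSecAux.no_section ⟨V, hVopen, ⟨_, hbV⟩,
      fun v => (e (v, ⟨1, rfl⟩) : ℕ → SU2),
      continuous_subtype_val.comp (e.continuous.comp (continuous_id.prodMk continuous_const)),
      fun v => he (v, ⟨1, rfl⟩)⟩
end
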